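/- Let T, U, V, W₁, W₂, Y₁, Y₂ be random variables on a common probability space taking values in finite sets. If I(V;Y₂|(T,W₂)) = I(V;Y₂|W₂), I(W₁;Y₂|(T,V,W₂)) = I(W₂;Y₁|(T,V,W₁)), and I(U;Y₁|(T,V,W₁)) = I(U;Y₁|W₁), then I(T;Y₂|W₂) + I(U;Y₁|W₁) + I(V;Y₂|W₂) ≤ I(U;Y₁|(T,V,W₁,W₂)) + I((T,W₁,W₂);Y₂) + I(V;Y₂|(T,W₁,W₂)). -/

import Mathlib

open MeasureTheory Real

/-- Shannon entropy (in nats) of a random variable taking values in a finite set. -/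
noncomputable def entropy {Ω : Type*} [MeasurableSpace Ω] (μ : Measure Ω)
    {S : Type*} [Fintype S] (X : Ω → S) : ℝ :=
  ∑ x : S, Real.negMulLog (μ (X ⁻¹' {x})).toReal

/-- Mutual information `I(X;Y) = H(X) + H(Y) - H(X,Y)`. -/
noncomputable def mutualInfo {Ω : Type*} [MeasurableSpace Ω] (μ : Measure Ω)
    {S T : Type*} [Fintype S] [Fintype T] (X : Ω → S) (Y : Ω → T) : ℝ :=
  entropy μ X + entropy μ Y - entropy μ (fun ω => (X ω, Y ω))

/-- Conditional mutual information `I(X;Y|Z) = H(X,Z) + H(Y,Z) - H(X,Y,Z) - H(Z)`. -/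
noncomputable def condMutualInfo {Ω : Type*} [MeasurableSpace Ω] (μ : Measure Ω)
    {S T R : Type*} [Fintype S] [Fintype T] [Fintype R]
    (X : Ω → S) (Y : Ω → T) (Z : Ω → R) : ℝ :=
  entropy μ (fun ω => (X ω, Z ω)) + entropy μ (fun ω => (Y ω, Z ω))
    - entropy μ (fun ω => (X ω, Y ω, Z ω)) - entropy μ Z

/-
Two chain-rule computations. Expanding `I(W₂,U;Y₁|T,V,W₁)` in both orders and dropping
`I(W₂;Y₁|U,T,V,W₁) ≥ 0` gives `I(U;Y₁|T,V,W₁) ≤ I(W₂;Y₁|T,V,W₁) + I(U;Y₁|T,V,W₁,W₂)`; by `h2` and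
`h1` the left side is `I(U;Y₁|W₁)` and the first term on the right is `I(W₁;Y₂|T,V,W₂)`.
Expanding `I(T,V,W₁,W₂;Y₂)` along `W₂, T, V, W₁` and along `(T,W₁,W₂), V` gives
`I(W₂;Y₂) + I(T;Y₂|W₂) + I(V;Y₂|T,W₂) + I(W₁;Y₂|T,V,W₂) = I(T,W₁,W₂;Y₂) + I(V;Y₂|T,W₁,W₂)`,
and `h0` together with `I(W₂;Y₂) ≥ 0` finishes. Nonnegativity of conditional mutual information
is Gibbs' inequality, proved termwise from `log x ≤ x - 1`.
-/

lemma mul_log_sub_log_le_sub {p q : ℝ} (hp : 0 ≤ p) (hq : 0 < q) :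
    p * (log q - log p) ≤ q - p := by
  rcases hp.eq_or_lt with rfl | hp
  · simpa using hq.le
  calc p * (log q - log p) = p * log (q / p) := by rw [log_div hq.ne' hp.ne']
    _ ≤ p * (q / p - 1) := by gcongr; exact log_le_sub_one_of_pos (by positivity)
    _ = q - p := by field_simp

lemma mul_log_mul_div_sub_log_le {p r s t : ℝ} (hp : 0 ≤ p) (hr : p ≤ r) (hs : p ≤ s)
    (ht : r ≤ t) : p * (log r + log s - log t - log p) ≤ r * s / t - p := by
  rcases hp.eq_or_lt with rfl | hp
  · rw [zero_mul, sub_zero]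
    exact div_nonneg (mul_nonneg hr hs) (hr.trans ht)
  have hrs : 0 < r * s := mul_pos (hp.trans_le hr) (hp.trans_le hs)
  have ht' : 0 < t := (hp.trans_le hr).trans_le ht
  rw [← log_mul (hp.trans_le hr).ne' (hp.trans_le hs).ne', ← log_div hrs.ne' ht'.ne']
  exact mul_log_sub_log_le_sub hp.le (div_pos hrs ht')

lemma sum_negMulLog_add_negMulLog_sum_le {α β : Type*} [Fintype α] [Fintype β]
    (p : α → β → ℝ) (hp : ∀ a b, 0 ≤ p a b) :
    ∑ a, ∑ b, negMulLog (p a b) + negMulLog (∑ a, ∑ b, p a b) ≤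
      ∑ a, negMulLog (∑ b, p a b) + ∑ b, negMulLog (∑ a, p a b) := by
  set r : α → ℝ := fun a => ∑ b, p a b
  set s : β → ℝ := fun b => ∑ a, p a b
  set t : ℝ := ∑ a, ∑ b, p a b
  have hr : ∀ a b, p a b ≤ r a := fun a b =>
    Finset.single_le_sum (fun b _ => hp a b) (Finset.mem_univ b)
  have hs : ∀ a b, p a b ≤ s b := fun a b =>
    Finset.single_le_sum (f := fun a => p a b) (fun a _ => hp a b) (Finset.mem_univ a)
  have ht : ∀ a, r a ≤ t := fun a =>
    Finset.single_le_sum (f := r) (fun a _ => Finset.sum_nonneg fun b _ => hp a b)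
      (Finset.mem_univ a)
  -- compare `p` with the product `r a * s b / t` of its marginals
  have key : ∀ a b, p a b * (log (r a) + log (s b) - log t - log (p a b)) ≤
      r a * s b / t - p a b := fun a b =>
    mul_log_mul_div_sub_log_le (hp a b) (hr a b) (hs a b) (ht a)
  have hrst : ∑ a, ∑ b, r a * s b / t = t := by
    calc ∑ a, ∑ b, r a * s b / t = (∑ a, r a) * (∑ b, s b) / t := by
          simp only [Finset.sum_mul_sum, Finset.sum_div]
      _ = t := by rw [show ∑ b, s b = t from Finset.sum_comm]; exact mul_self_div_self t
  have hr' : ∑ a, negMulLog (r a) = -∑ a, ∑ b, p a b * log (r a) := by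
    simp only [negMulLog, r, neg_mul, Finset.sum_mul, Finset.sum_neg_distrib]
  have hs' : ∑ b, negMulLog (s b) = -∑ a, ∑ b, p a b * log (s b) := by
    rw [Finset.sum_comm]
    simp only [negMulLog, s, neg_mul, Finset.sum_mul, Finset.sum_neg_distrib]
  have ht' : negMulLog t = -∑ a, ∑ b, p a b * log t := by
    simp only [negMulLog, t, neg_mul, Finset.sum_mul]
  have hp' : ∑ a, ∑ b, negMulLog (p a b) = -∑ a, ∑ b, p a b * log (p a b) := by
    simp only [negMulLog, neg_mul, Finset.sum_neg_distrib]
  have := Finset.sum_le_sum fun a (_ : a ∈ Finset.univ) =>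
    Finset.sum_le_sum fun b (_ : b ∈ Finset.univ) => key a b
  simp only [mul_sub, mul_add, Finset.sum_add_distrib, Finset.sum_sub_distrib] at this
  linarith

section
variable {Ω : Type*} [MeasurableSpace Ω] (μ : Measure Ω)

lemma entropy_comp_of_injective {S S' : Type*} [Fintype S] [Fintype S'] (X : Ω → S)
    (e : S → S') (he : Function.Injective e) :
    entropy μ (fun ω => e (X ω)) = entropy μ X := by
  classical
  rw [entropy, ← Finset.sum_subset (Finset.subset_univ (Finset.univ.image e)),
    Finset.sum_image he.injOn]
  · simp only [entropy, Set.preimage, Set.mem_singleton_iff, he.eq_iff]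
  · intro s _ hs
    have : (fun ω => e (X ω)) ⁻¹' {s} = ∅ :=
      Set.eq_empty_of_forall_notMem fun ω hω =>
        hs (Finset.mem_image.2 ⟨X ω, Finset.mem_univ _, hω⟩)
    simp [this]

lemma entropy_const [IsProbabilityMeasure μ] {S : Type*} [Fintype S] (c : S) :
    entropy μ (fun _ => c) = 0 := by
  rw [entropy, Finset.sum_eq_single c]
  · simp
  · intro s _ hs
    simp [Set.preimage_const_of_notMem (Set.mem_singleton_iff.not.2 (Ne.symm hs))]
  · simp

lemma measureReal_preimage_comp_eq_sum [IsFiniteMeasure μ] {γ δ : Type*} [Fintype γ]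
    [MeasurableSpace γ] [MeasurableSingletonClass γ] [DecidableEq δ] {F : Ω → γ}
    (hF : Measurable F) (g : γ → δ) (d : δ) :
    μ.real ((fun ω => g (F ω)) ⁻¹' {d}) = ∑ c with g c = d, μ.real (F ⁻¹' {c}) := by
  rw [sum_measureReal_preimage_singleton _ fun c _ => hF (measurableSet_singleton c),
    Finset.coe_filter]
  congr 1
  ext
  simp

lemma condMutualInfo_nonneg [IsFiniteMeasure μ] {SX SY SZ : Type*}
    [Fintype SX] [MeasurableSpace SX] [MeasurableSingletonClass SX]
    [Fintype SY] [MeasurableSpace SY] [MeasurableSingletonClass SY]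
    [Fintype SZ] [MeasurableSpace SZ] [MeasurableSingletonClass SZ]
    {X : Ω → SX} {Y : Ω → SY} {Z : Ω → SZ} (hX : Measurable X) (hY : Measurable Y)
    (hZ : Measurable Z) :
    0 ≤ condMutualInfo μ X Y Z := by
  classical
  have hF : Measurable fun ω => (X ω, Y ω, Z ω) := hX.prodMk (hY.prodMk hZ)
  set p : SX → SY → SZ → ℝ := fun x y z => μ.real ((fun ω => (X ω, Y ω, Z ω)) ⁻¹' {(x, y, z)})
  have hXZ : entropy μ (fun ω => (X ω, Z ω)) = ∑ z, ∑ x, negMulLog (∑ y, p x y z) := by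
    simp only [entropy, Fintype.sum_prod_type_right, ← measureReal_def]
    refine Finset.sum_congr rfl fun z _ => Finset.sum_congr rfl fun x _ => ?_
    rw [(measureReal_preimage_comp_eq_sum μ hF (fun c => (c.1, c.2.2)) (x, z) :)]
    simp [Finset.sum_filter, Fintype.sum_prod_type, Prod.ext_iff, ite_and, p]
  have hYZ : entropy μ (fun ω => (Y ω, Z ω)) = ∑ z, ∑ y, negMulLog (∑ x, p x y z) := by
    simp only [entropy, Fintype.sum_prod_type_right, ← measureReal_def]
    refine Finset.sum_congr rfl fun z _ => Finset.sum_congr rfl fun y _ => ?_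
    rw [(measureReal_preimage_comp_eq_sum μ hF (fun c => c.2) (y, z) :)]
    simp [Finset.sum_filter, Fintype.sum_prod_type, Prod.ext_iff, ite_and, p]
  have hXYZ : entropy μ (fun ω => (X ω, Y ω, Z ω)) = ∑ z, ∑ x, ∑ y, negMulLog (p x y z) := by
    simp only [entropy, Fintype.sum_prod_type_right, ← measureReal_def]
    exact Finset.sum_congr rfl fun z _ => Finset.sum_comm
  have hZ : entropy μ Z = ∑ z, negMulLog (∑ x, ∑ y, p x y z) := by
    simp only [entropy, ← measureReal_def]
    refine Finset.sum_congr rfl fun z _ => ?_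
    rw [(measureReal_preimage_comp_eq_sum μ hF (fun c => c.2.2) z :)]
    simp [Finset.sum_filter, Fintype.sum_prod_type, p]
  have := Finset.sum_le_sum fun z (_ : z ∈ Finset.univ) =>
    sum_negMulLog_add_negMulLog_sum_le (fun x y => p x y z) fun x y => measureReal_nonneg
  rw [condMutualInfo, hXZ, hYZ, hXYZ, hZ]
  simp only [Finset.sum_add_distrib] at this
  linarith

lemma condMutualInfo_const [IsProbabilityMeasure μ] {SX SY SZ : Type*} [Fintype SX] [Fintype SY]
    [Fintype SZ] (X : Ω → SX) (Y : Ω → SY) (c : SZ) :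
    condMutualInfo μ X Y (fun _ => c) = mutualInfo μ X Y := by
  have hXc : entropy μ (fun ω => (X ω, c)) = entropy μ X :=
    entropy_comp_of_injective μ X (fun x => (x, c)) (Prod.mk_left_injective c)
  have hYc : entropy μ (fun ω => (Y ω, c)) = entropy μ Y :=
    entropy_comp_of_injective μ Y (fun y => (y, c)) (Prod.mk_left_injective c)
  have hXYc : entropy μ (fun ω => (X ω, Y ω, c)) = entropy μ (fun ω => (X ω, Y ω)) :=
    entropy_comp_of_injective μ (fun ω => (X ω, Y ω)) (fun p : SX × SY => (p.1, p.2, c))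
      (Function.LeftInverse.injective (g := fun q : SX × SY × SZ => (q.1, q.2.1)) fun _ => rfl)
  rw [condMutualInfo, mutualInfo, hXc, hYc, hXYc, entropy_const]
  ring

lemma mutualInfo_nonneg [IsProbabilityMeasure μ] {SX SY : Type*}
    [Fintype SX] [MeasurableSpace SX] [MeasurableSingletonClass SX]
    [Fintype SY] [MeasurableSpace SY] [MeasurableSingletonClass SY]
    {X : Ω → SX} {Y : Ω → SY} (hX : Measurable X) (hY : Measurable Y) :
    0 ≤ mutualInfo μ X Y := by
  rw [← condMutualInfo_const μ X Y ()]
  exact condMutualInfo_nonneg μ hX hY measurable_const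

lemma mutualInfo_comp_left_of_injective {SX SX' SY : Type*} [Fintype SX] [Fintype SX']
    [Fintype SY] (X : Ω → SX) (Y : Ω → SY) (e : SX → SX') (he : Function.Injective e) :
    mutualInfo μ (fun ω => e (X ω)) Y = mutualInfo μ X Y := by
  have hXY : entropy μ (fun ω => (e (X ω), Y ω)) = entropy μ (fun ω => (X ω, Y ω)) :=
    entropy_comp_of_injective μ (fun ω => (X ω, Y ω)) (Prod.map e id)
      (he.prodMap Function.injective_id)
  rw [mutualInfo, mutualInfo, entropy_comp_of_injective μ X e he, hXY]

lemma condMutualInfo_comp_right_of_injective {SX SY SZ SZ' : Type*} [Fintype SX] [Fintype SY]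
    [Fintype SZ] [Fintype SZ'] (X : Ω → SX) (Y : Ω → SY) (Z : Ω → SZ) (e : SZ → SZ')
    (he : Function.Injective e) :
    condMutualInfo μ X Y (fun ω => e (Z ω)) = condMutualInfo μ X Y Z := by
  have hXZ : entropy μ (fun ω => (X ω, e (Z ω))) = entropy μ (fun ω => (X ω, Z ω)) :=
    entropy_comp_of_injective μ (fun ω => (X ω, Z ω)) (Prod.map id e)
      (Function.injective_id.prodMap he)
  have hYZ : entropy μ (fun ω => (Y ω, e (Z ω))) = entropy μ (fun ω => (Y ω, Z ω)) :=
    entropy_comp_of_injective μ (fun ω => (Y ω, Z ω)) (Prod.map id e)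
      (Function.injective_id.prodMap he)
  have hXYZ : entropy μ (fun ω => (X ω, Y ω, e (Z ω))) = entropy μ (fun ω => (X ω, Y ω, Z ω)) :=
    entropy_comp_of_injective μ (fun ω => (X ω, Y ω, Z ω))
      (Prod.map id (Prod.map id e))
      (Function.injective_id.prodMap (Function.injective_id.prodMap he))
  rw [condMutualInfo, condMutualInfo, entropy_comp_of_injective μ Z e he, hXZ, hYZ, hXYZ]

lemma mutualInfo_add_condMutualInfo {SX SY SZ : Type*} [Fintype SX] [Fintype SY] [Fintype SZ]
    (X : Ω → SX) (Y : Ω → SY) (Z : Ω → SZ) :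
    mutualInfo μ Z Y + condMutualInfo μ X Y Z = mutualInfo μ (fun ω => (X ω, Z ω)) Y := by
  have hZY : entropy μ (fun ω => (Z ω, Y ω)) = entropy μ (fun ω => (Y ω, Z ω)) :=
    entropy_comp_of_injective μ (fun ω => (Y ω, Z ω)) Prod.swap Prod.swap_injective
  have hXZY : entropy μ (fun ω => ((X ω, Z ω), Y ω)) = entropy μ (fun ω => (X ω, Y ω, Z ω)) :=
    entropy_comp_of_injective μ (fun ω => (X ω, Y ω, Z ω))
      (fun p : SX × SY × SZ => ((p.1, p.2.2), p.2.1))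
      (Function.LeftInverse.injective (g := fun q : (SX × SZ) × SY => (q.1.1, q.2, q.1.2))
        fun _ => rfl)
  rw [mutualInfo, mutualInfo, condMutualInfo, hZY, hXZY]
  ring

lemma condMutualInfo_le_add [IsFiniteMeasure μ] {SX SY SZ SW : Type*}
    [Fintype SX] [MeasurableSpace SX] [MeasurableSingletonClass SX]
    [Fintype SY] [MeasurableSpace SY] [MeasurableSingletonClass SY]
    [Fintype SZ] [MeasurableSpace SZ] [MeasurableSingletonClass SZ]
    [Fintype SW] [MeasurableSpace SW] [MeasurableSingletonClass SW]
    {X : Ω → SX} {Y : Ω → SY} {Z : Ω → SZ} {W : Ω → SW} (hX : Measurable X) (hY : Measurable Y)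
    (hZ : Measurable Z) (hW : Measurable W) :
    condMutualInfo μ X Y Z ≤
      condMutualInfo μ W Y Z + condMutualInfo μ X Y (fun ω => (W ω, Z ω)) := by
  have hXWZ : entropy μ (fun ω => (X ω, W ω, Z ω)) = entropy μ (fun ω => (W ω, X ω, Z ω)) :=
    entropy_comp_of_injective μ (fun ω => (W ω, X ω, Z ω))
      (fun p : SW × SX × SZ => (p.2.1, p.1, p.2.2))
      (Function.LeftInverse.injective (g := fun q : SX × SW × SZ => (q.2.1, q.1, q.2.2))
        fun _ => rfl)
  have hXYWZ : entropy μ (fun ω => (X ω, Y ω, W ω, Z ω)) =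
      entropy μ (fun ω => (W ω, Y ω, X ω, Z ω)) :=
    entropy_comp_of_injective μ (fun ω => (W ω, Y ω, X ω, Z ω))
      (fun p : SW × SY × SX × SZ => (p.2.2.1, p.2.1, p.1, p.2.2.2))
      (Function.LeftInverse.injective
        (g := fun q : SX × SY × SW × SZ => (q.2.2.1, q.2.1, q.1, q.2.2.2)) fun _ => rfl)
  have hXYZ : entropy μ (fun ω => (X ω, Y ω, Z ω)) = entropy μ (fun ω => (Y ω, X ω, Z ω)) :=
    entropy_comp_of_injective μ (fun ω => (Y ω, X ω, Z ω))
      (fun p : SY × SX × SZ => (p.2.1, p.1, p.2.2))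
      (Function.LeftInverse.injective (g := fun q : SX × SY × SZ => (q.2.1, q.1, q.2.2))
        fun _ => rfl)
  have hWYZ : entropy μ (fun ω => (W ω, Y ω, Z ω)) = entropy μ (fun ω => (Y ω, W ω, Z ω)) :=
    entropy_comp_of_injective μ (fun ω => (Y ω, W ω, Z ω))
      (fun p : SY × SW × SZ => (p.2.1, p.1, p.2.2))
      (Function.LeftInverse.injective (g := fun q : SW × SY × SZ => (q.2.1, q.1, q.2.2))
        fun _ => rfl)
  have := condMutualInfo_nonneg μ hW hY (hX.prodMk hZ)
  simp only [condMutualInfo] at this ⊢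
  linarith

end

theorem stmt_14
    {Ω : Type*} [MeasurableSpace Ω] (μ : Measure Ω) [IsProbabilityMeasure μ]
    {ST SU SV SW₁ SW₂ SY₁ SY₂ : Type*}
    [Fintype ST] [MeasurableSpace ST] [MeasurableSingletonClass ST] [Fintype SU] [MeasurableSpace SU] [MeasurableSingletonClass SU] [Fintype SV] [MeasurableSpace SV] [MeasurableSingletonClass SV] [Fintype SW₁] [MeasurableSpace SW₁] [MeasurableSingletonClass SW₁] [Fintype SW₂] [MeasurableSpace SW₂] [MeasurableSingletonClass SW₂] [Fintype SY₁] [MeasurableSpace SY₁] [MeasurableSingletonClass SY₁] [Fintype SY₂] [MeasurableSpace SY₂] [MeasurableSingletonClass SY₂]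
    (T : Ω → ST) (U : Ω → SU) (V : Ω → SV) (W₁ : Ω → SW₁) (W₂ : Ω → SW₂) (Y₁ : Ω → SY₁) (Y₂ : Ω → SY₂)
    (hT : Measurable T) (hU : Measurable U) (hV : Measurable V) (hW₁ : Measurable W₁) (hW₂ : Measurable W₂) (hY₁ : Measurable Y₁) (hY₂ : Measurable Y₂)
    (h0 : condMutualInfo μ V Y₂ (fun ω => (T ω, W₂ ω)) = condMutualInfo μ V Y₂ W₂)
    (h1 : condMutualInfo μ W₁ Y₂ (fun ω => (T ω, V ω, W₂ ω)) = condMutualInfo μ W₂ Y₁ (fun ω => (T ω, V ω, W₁ ω)))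
    (h2 : condMutualInfo μ U Y₁ (fun ω => (T ω, V ω, W₁ ω)) = condMutualInfo μ U Y₁ W₁)
    : condMutualInfo μ T Y₂ W₂ + condMutualInfo μ U Y₁ W₁ + condMutualInfo μ V Y₂ W₂ ≤ condMutualInfo μ U Y₁ (fun ω => (T ω, V ω, W₁ ω, W₂ ω)) + mutualInfo μ (fun ω => (T ω, W₁ ω, W₂ ω)) Y₂ + condMutualInfo μ V Y₂ (fun ω => (T ω, W₁ ω, W₂ ω)) := by
  have hUY₁ : condMutualInfo μ U Y₁ W₁ ≤ condMutualInfo μ W₁ Y₂ (fun ω => (T ω, V ω, W₂ ω)) +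
      condMutualInfo μ U Y₁ (fun ω => (T ω, V ω, W₁ ω, W₂ ω)) := by
    have hreorder : condMutualInfo μ U Y₁ (fun ω => (T ω, V ω, W₁ ω, W₂ ω)) =
        condMutualInfo μ U Y₁ (fun ω => (W₂ ω, T ω, V ω, W₁ ω)) :=
      condMutualInfo_comp_right_of_injective μ U Y₁ (fun ω => (W₂ ω, T ω, V ω, W₁ ω))
        (fun p : SW₂ × ST × SV × SW₁ => (p.2.1, p.2.2.1, p.2.2.2, p.1))
        (Function.LeftInverse.injective
          (g := fun q : ST × SV × SW₁ × SW₂ => (q.2.2.2, q.1, q.2.1, q.2.2.1)) fun _ => rfl)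
    rw [← h2, h1, hreorder]
    exact condMutualInfo_le_add μ hU hY₁ (hT.prodMk (hV.prodMk hW₁)) hW₂
  have hVT : mutualInfo μ (fun ω => (V ω, T ω, W₂ ω)) Y₂ =
      mutualInfo μ (fun ω => (T ω, V ω, W₂ ω)) Y₂ :=
    mutualInfo_comp_left_of_injective μ (fun ω => (T ω, V ω, W₂ ω)) Y₂
      (fun p : ST × SV × SW₂ => (p.2.1, p.1, p.2.2))
      (Function.LeftInverse.injective
        (g := fun q : SV × ST × SW₂ => (q.2.1, q.1, q.2.2)) fun _ => rfl)
  have hchain : mutualInfo μ W₂ Y₂ + condMutualInfo μ T Y₂ W₂ +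
      condMutualInfo μ V Y₂ (fun ω => (T ω, W₂ ω)) +
      condMutualInfo μ W₁ Y₂ (fun ω => (T ω, V ω, W₂ ω)) =
      mutualInfo μ (fun ω => (T ω, W₁ ω, W₂ ω)) Y₂ +
      condMutualInfo μ V Y₂ (fun ω => (T ω, W₁ ω, W₂ ω)) := by
    rw [mutualInfo_add_condMutualInfo, mutualInfo_add_condMutualInfo, hVT,
      mutualInfo_add_condMutualInfo, mutualInfo_add_condMutualInfo]
    exact mutualInfo_comp_left_of_injective μ (fun ω => (V ω, T ω, W₁ ω, W₂ ω)) Y₂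
      (fun p : SV × ST × SW₁ × SW₂ => (p.2.2.1, p.2.1, p.1, p.2.2.2))
      (Function.LeftInverse.injective
        (g := fun q : SW₁ × ST × SV × SW₂ => (q.2.2.1, q.2.1, q.1, q.2.2.2)) fun _ => rfl)
  linarith [mutualInfo_nonneg μ hW₂ hY₂]
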